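/- If M is a good monomial such that AM is also good, then the conjugated element Ad_s(w_M) = s w_M s^{-1} fixes ε̄_2, i.e. s w_M s^{-1}(ε̄_2) = ε̄_2. -/
import Mathlib


/-! Concrete model of the weight space `h*` of affine `sl_l`:
`Vl l = (Fin l → ℝ) × ℝ × ℝ`, with `(v, a, b)` representing `v + a Λ_0 + b δ`
(`v` in the span of the `ε_i`); the invariant form is
`(v,a,b)·(v',a',b') = v·v' + a b' + b a'`, normalized so `(α_i, α_i) = 2`. -/
abbrev Vl (l : ℕ) := (Fin l → ℝ) × ℝ × ℝ

/-- The normalized invariant bilinear form. -/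
noncomputable def form {l : ℕ} (μ ν : Vl l) : ℝ :=
  (∑ i, μ.1 i * ν.1 i) + μ.2.1 * ν.2.2 + μ.2.2 * ν.2.1

/-- The null root `δ`. -/
noncomputable def deltaV (l : ℕ) : Vl l := (0, 0, 1)

/-- The fundamental weight `Λ_0`. -/
noncomputable def Lam0 (l : ℕ) : Vl l := (0, 1, 0)

/-- `ebn l i` is `ε̄_{i+1} = ε_{i+1} - (ε_1 + ... + ε_l)/l` (`0`-indexed,
index read modulo `l`). -/
noncomputable def ebn (l i : ℕ) : Vl l :=
  (fun j => (if (j : ℕ) = i % l then 1 else 0) - 1 / (l : ℝ), 0, 0)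

/-- The root `α_{1j} = ε̄_1 - ε̄_j` (for `2 ≤ j ≤ l`). -/
noncomputable def alpha1 (l j : ℕ) : Vl l := ebn l 0 - ebn l (j - 1)

/-- The translation `t_γ(μ) = μ + (μ,δ)γ - ((1/2)(μ,δ)(γ,γ) + (γ,μ))δ`
(Kac, formula (6.5.2)). -/
noncomputable def transV {l : ℕ} (γ : Vl l) (μ : Vl l) : Vl l :=
  μ + (form μ (deltaV l)) • γ -
    ((1 / 2) * form μ (deltaV l) * form γ γ + form γ μ) • (deltaV l)

/-- The reflection `r_β(μ) = μ - (μ,β)β` in a real root `β`. -/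
noncomputable def reflV {l : ℕ} (β : Vl l) (μ : Vl l) : Vl l :=
  μ - (form μ β) • β

/-- The permutation `σ = (2 3 ... l)` acting on `h*`:
`σ(ε̄_i) = ε̄_{σ(i)}`, `σ(Λ_0) = Λ_0`, `σ(δ) = δ`. -/
noncomputable def sigmaV {l : ℕ} (hl : 0 < l) (μ : Vl l) : Vl l :=
  (fun j => μ.1 ⟨(if (j : ℕ) = 0 then 0 else if (j : ℕ) = 1 then l - 1
      else (j : ℕ) - 1) % l, Nat.mod_lt _ hl⟩, μ.2.1, μ.2.2)

/-- The shift element `s = t_{ε̄_2} ∘ σ` of the extended affine Weyl group. -/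
noncomputable def sV (l : ℕ) (hl : 0 < l) (μ : Vl l) : Vl l :=
  transV (ebn l 1) (sigmaV hl μ)

/-- The inverse shift `s⁻¹ = σ⁻¹ ∘ t_{-ε̄_2}`. -/
noncomputable def sVinv (l : ℕ) (hl : 0 < l) (μ : Vl l) : Vl l :=
  ((fun (ν : Vl l) => ((fun j => ν.1 ⟨(if (j : ℕ) = 0 then 0
      else if (j : ℕ) = l - 1 then 1 else (j : ℕ) + 1) % l,
      Nat.mod_lt _ hl⟩, ν.2.1, ν.2.2) : Vl l))
    (transV (-(ebn l 1)) μ))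

/-- Letters of monomials: `A` and `B`. -/
inductive Letter : Type
  | A : Letter
  | B : Letter

/-- A word `C_1 ⋯ C_n` in the letters `A, B` is *good* if `C_i = A` implies
`C_{i+l-1} = A` whenever that position exists. -/
def Good (l : ℕ) (C : List Letter) : Prop :=
  ∀ i : ℕ, (h : i + (l - 1) < C.length) →
    C.get ⟨i, by omega⟩ = Letter.A → C.get ⟨i + (l - 1), h⟩ = Letter.A

/-- The sequence of roots `β_{m(l-1)+r} = α_{1,r+1} + mδ` (`1 ≤ r ≤ l-1`),
i.e. `β_1, β_2, ... = α_{12}, α_{13}, ..., α_{1l}, α_{12} + δ, ...`. -/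
noncomputable def betaSeq (l i : ℕ) : Vl l :=
  alpha1 l ((i - 1) % (l - 1) + 2) + (((i - 1) / (l - 1) : ℕ) : ℝ) • deltaV l

/-- `wWord l i M` is the Weyl group element `r_{γ_p} ⋯ r_{γ_1}` (as a map on
`h*`) attached to the word `M = C_i C_{i+1} ⋯`, where `γ_1, ..., γ_p` is the
subsequence of `β_i, β_{i+1}, ...` obtained by deleting those `β_m` with
`C_m = A`; `w_M = wWord l 1 M`. -/
noncomputable def wWord (l : ℕ) : ℕ → List Letter → (Vl l → Vl l)
  | _, [] => id
  | i, (Letter.A :: M) => wWord l (i + 1) M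
  | i, (Letter.B :: M) => wWord l (i + 1) M ∘ reflV (betaSeq l i)


/-! ### Auxiliary lemmas -/

section Aux

open Finset

lemma sum_ite_val (l p : ℕ) (hp : p < l) (g : Fin l → ℝ) :
    ∑ i : Fin l, (if (i : ℕ) = p then g i else 0) = g ⟨p, hp⟩ := by
  rw [show (fun i : Fin l => if (i : ℕ) = p then g i else 0)
      = (fun i => if i = ⟨p, hp⟩ then g i else 0) from
    funext fun i => by simp [Fin.ext_iff]]
  simp [Finset.sum_ite_eq']

/-- `μ = ε̄_l + ((l-1)/l) δ`. -/
noncomputable def muV (l : ℕ) : Vl l :=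
  (fun j => (if (j : ℕ) = l - 1 then 1 else 0) - 1 / (l : ℝ), 0, ((l : ℝ) - 1) / l)

lemma sum_sq (l p : ℕ) (hl : 0 < l) (hp : p < l) :
    ∑ i : Fin l, ((if (i : ℕ) = p then (1:ℝ) else 0) - 1 / l) *
      ((if (i : ℕ) = p then (1:ℝ) else 0) - 1 / l) = ((l : ℝ) - 1) / l := by
  have hl0 : (l : ℝ) ≠ 0 := by positivity
  have : ∀ i : Fin l, ((if (i : ℕ) = p then (1:ℝ) else 0) - 1 / l) *
      ((if (i : ℕ) = p then (1:ℝ) else 0) - 1 / l)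
      = (if (i : ℕ) = p then (1 - 2 / (l:ℝ)) else 0) + 1 / (l:ℝ) ^ 2 := by
    intro i
    split_ifs <;> field_simp <;> ring
  rw [Finset.sum_congr rfl fun i _ => this i, Finset.sum_add_distrib,
    sum_ite_val l p hp (fun _ => (1 - 2 / (l:ℝ))), Finset.sum_const]
  simp only [Finset.card_univ, Fintype.card_fin, nsmul_eq_mul]
  field_simp
  ring

lemma sVinv_eb2 (l : ℕ) (hl0 : 0 < l) (hl : 2 ≤ l) :
    sVinv l hl0 (ebn l 1) = muV l := by
  have h1l : 1 % l = 1 := Nat.mod_eq_of_lt (by omega)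
  have hform0 : form (ebn l 1) (deltaV l) = 0 := by
    simp [form, ebn, deltaV]
  have hformg : form (-(ebn l 1)) (ebn l 1) = -(((l : ℝ) - 1) / l) := by
    simp only [form, ebn, deltaV, h1l, Prod.fst_neg, Prod.snd_neg, Pi.neg_apply,
      neg_mul, Finset.sum_neg_distrib, neg_zero, mul_zero, zero_mul, add_zero]
    rw [sum_sq l 1 hl0 (by omega)]
  have htrans : transV (-(ebn l 1)) (ebn l 1)
      = (fun j : Fin l => (if (j : ℕ) = 1 then 1 else 0) - 1 / (l : ℝ), 0, ((l : ℝ) - 1) / l) := by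
    unfold transV
    rw [hform0, hformg]
    unfold ebn deltaV
    rw [h1l]
    refine Prod.ext ?_ (Prod.ext ?_ ?_) <;>
      simp only [Prod.fst_add, Prod.fst_sub, Prod.snd_add, Prod.snd_sub,
        Prod.smul_fst, Prod.smul_snd, smul_eq_mul]
    · funext j
      simp only [Pi.add_apply, Pi.sub_apply, Pi.smul_apply, smul_eq_mul, Pi.zero_apply]
      ring
    · ring
    · ring
  unfold sVinv
  rw [htrans]
  unfold muV
  refine Prod.ext ?_ rfl
  funext j
  have hj : (j : ℕ) < l := j.isLt
  show (if ((if (j:ℕ) = 0 then 0 else if (j:ℕ) = l - 1 then 1 else (j:ℕ) + 1) % l : ℕ) = 1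
      then (1:ℝ) else 0) - 1 / l = (if (j:ℕ) = l - 1 then 1 else 0) - 1 / l
  congr 1
  by_cases h0 : (j : ℕ) = 0
  · rw [if_pos h0, Nat.zero_mod, if_neg (show ¬ (0:ℕ) = 1 by omega),
      if_neg (show ¬ (j:ℕ) = l - 1 by omega)]
  · by_cases h1 : (j : ℕ) = l - 1
    · rw [if_neg h0, if_pos h1, h1l, if_pos rfl, if_pos h1]
    · rw [if_neg h0, if_neg h1, Nat.mod_eq_of_lt (show (j:ℕ) + 1 < l by omega),
        if_neg (show ¬ (j:ℕ) + 1 = 1 by omega), if_neg h1]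

lemma sV_mu (l : ℕ) (hl0 : 0 < l) (hl : 2 ≤ l) :
    sV l hl0 (muV l) = ebn l 1 := by
  have h1l : 1 % l = 1 := Nat.mod_eq_of_lt (by omega)
  have hsig : sigmaV hl0 (muV l)
      = (fun j : Fin l => (if (j : ℕ) = 1 then 1 else 0) - 1 / (l : ℝ), 0, ((l : ℝ) - 1) / l) := by
    unfold sigmaV muV
    refine Prod.ext ?_ rfl
    funext j
    have hj : (j : ℕ) < l := j.isLt
    show (if ((if (j:ℕ) = 0 then 0 else if (j:ℕ) = 1 then l - 1 else (j:ℕ) - 1) % l : ℕ) = l - 1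
        then (1:ℝ) else 0) - 1 / l = (if (j:ℕ) = 1 then 1 else 0) - 1 / l
    congr 1
    by_cases h0 : (j : ℕ) = 0
    · rw [if_pos h0, Nat.zero_mod, if_neg (show ¬ (0:ℕ) = l - 1 by omega),
        if_neg (show ¬ (j:ℕ) = 1 by omega)]
    · by_cases h1 : (j : ℕ) = 1
      · rw [if_neg h0, if_pos h1, Nat.mod_eq_of_lt (show l - 1 < l by omega),
          if_pos rfl, if_pos h1]
      · rw [if_neg h0, if_neg h1, Nat.mod_eq_of_lt (show (j:ℕ) - 1 < l by omega),
          if_neg (show ¬ (j:ℕ) - 1 = l - 1 by omega), if_neg h1]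
  unfold sV
  rw [hsig]
  have hform0 : form ((fun j => (if (j : ℕ) = 1 then 1 else 0) - 1 / (l : ℝ), 0,
      ((l : ℝ) - 1) / l) : Vl l) (deltaV l) = 0 := by
    simp [form, deltaV]
  have hformg : form (ebn l 1) ((fun j => (if (j : ℕ) = 1 then 1 else 0) - 1 / (l : ℝ), 0,
      ((l : ℝ) - 1) / l) : Vl l) = ((l : ℝ) - 1) / l := by
    simp only [form, ebn, h1l, mul_zero, zero_mul, add_zero]
    rw [sum_sq l 1 hl0 (by omega)]
  unfold transV
  rw [hform0, hformg]
  simp [ebn, deltaV, h1l, Prod.ext_iff]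

lemma refl_fix_mu (l : ℕ) (hl0 : 0 < l) (hl : 2 ≤ l) (i : ℕ) (hi : 1 ≤ i)
    (hmod : i % (l - 1) ≠ 0) : reflV (betaSeq l i) (muV l) = muV l := by
  set r := (i - 1) % (l - 1) with hr
  have hrlt : r < l - 1 := Nat.mod_lt _ (by omega)
  have hrne : r ≠ l - 2 := by
    intro hre
    apply hmod
    have : i = (i - 1) + 1 := by omega
    rw [this, Nat.add_mod, ← hr, hre]
    rcases Nat.eq_or_lt_of_le (show 1 ≤ l - 1 by omega) with h | h
    · simp [← h, Nat.mod_one]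
    · rw [Nat.mod_eq_of_lt (show 1 < l - 1 from h),
        show l - 2 + 1 = l - 1 by omega, Nat.mod_self]
  have hbeta : betaSeq l i
      = (fun k : Fin l => (if (k : ℕ) = 0 then (1:ℝ) else 0) - (if (k : ℕ) = r + 1 then 1 else 0),
        0, (((i - 1) / (l - 1) : ℕ) : ℝ)) := by
    unfold betaSeq alpha1 ebn deltaV
    rw [show (i - 1) % (l - 1) + 2 - 1 = r + 1 by omega]
    rw [Nat.zero_mod, Nat.mod_eq_of_lt (show r + 1 < l by omega)]
    refine Prod.ext ?_ (Prod.ext ?_ ?_) <;>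
      simp only [Prod.fst_add, Prod.fst_sub, Prod.snd_add, Prod.snd_sub,
        Prod.smul_fst, Prod.smul_snd, smul_eq_mul]
    · funext k
      simp only [Pi.add_apply, Pi.sub_apply, Pi.smul_apply, smul_eq_mul, Pi.zero_apply]
      ring
    · ring
    · ring
  have hform : form (muV l) (betaSeq l i) = 0 := by
    rw [hbeta]
    simp only [form, muV, mul_zero, zero_mul, add_zero]
    have : ∀ k : Fin l, ((if (k : ℕ) = l - 1 then (1:ℝ) else 0) - 1 / l) *
        ((if (k : ℕ) = 0 then (1:ℝ) else 0) - (if (k : ℕ) = r + 1 then 1 else 0))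
        = (if (k : ℕ) = 0 then ((if (k : ℕ) = l - 1 then (1:ℝ) else 0) - 1 / l) else 0)
          - (if (k : ℕ) = r + 1 then ((if (k : ℕ) = l - 1 then (1:ℝ) else 0) - 1 / l) else 0) := by
      intro k
      split_ifs <;> ring
    rw [Finset.sum_congr rfl fun k _ => this k, Finset.sum_sub_distrib,
      sum_ite_val l 0 (by omega), sum_ite_val l (r + 1) (by omega)]
    rw [if_neg (by omega : ¬ (0 : ℕ) = l - 1), if_neg (by omega : ¬ r + 1 = l - 1)]
    ring
  unfold reflV
  rw [hform]
  simp

lemma wWord_fix (l : ℕ) (hl0 : 0 < l) (hl : 2 ≤ l) :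
    ∀ (M : List Letter) (i : ℕ), 1 ≤ i →
    (∀ j, (h : j < M.length) → (i + j) % (l - 1) = 0 → M.get ⟨j, h⟩ = Letter.A) →
    wWord l i M (muV l) = muV l := by
  intro M
  induction M with
  | nil => intro i _ _; rfl
  | cons C M ih =>
    intro i hi hA
    cases C with
    | A =>
      show wWord l (i + 1) M (muV l) = muV l
      exact ih (i + 1) (by omega) fun j h hj =>
        hA (j + 1) (by simpa using Nat.succ_lt_succ h) (by rw [show i + 1 + j = i + (j + 1) by omega] at hj; exact hj)
    | B =>
      have hmod : i % (l - 1) ≠ 0 := by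
        intro h0
        have := hA 0 (by simp) (by simpa using h0)
        simp at this
      show wWord l (i + 1) M (reflV (betaSeq l i) (muV l)) = muV l
      rw [refl_fix_mu l hl0 hl i hi hmod]
      exact ih (i + 1) (by omega) fun j h hj =>
        hA (j + 1) (by simpa using Nat.succ_lt_succ h) (by rw [show i + 1 + j = i + (j + 1) by omega] at hj; exact hj)

lemma good_cons_A (l : ℕ) (hl : 2 ≤ l) (M : List Letter)
    (hAM : Good l (Letter.A :: M)) :
    ∀ j, (h : j < M.length) → (1 + j) % (l - 1) = 0 → M.get ⟨j, h⟩ = Letter.A := by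
  have key : ∀ i, i % (l - 1) = 0 → (h : i < (Letter.A :: M).length) →
      (Letter.A :: M).get ⟨i, h⟩ = Letter.A := by
    intro i
    induction i using Nat.strong_induction_on with
    | _ i ih =>
      intro hmod h
      rcases Nat.eq_zero_or_pos i with h0 | h0
      · subst h0; rfl
      · have hile : l - 1 ≤ i := by
          by_contra hc
          push_neg at hc
          rw [Nat.mod_eq_of_lt hc] at hmod
          omega
        obtain ⟨k, rfl⟩ : ∃ k, i = k + (l - 1) := ⟨i - (l - 1), by omega⟩
        have hkmod : k % (l - 1) = 0 := by
          have hd : (l - 1) ∣ (k + (l - 1)) := Nat.dvd_of_mod_eq_zero hmod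
          have hdk : (l - 1) ∣ k := by
            have := Nat.dvd_sub hd (dvd_refl (l - 1))
            simpa using this
          exact Nat.mod_eq_zero_of_dvd hdk
        exact hAM k (by simpa using h) (ih k (by omega) hkmod (by omega))
  intro j h hj
  have := key (j + 1) (by rwa [Nat.add_comm] at hj) (by simpa using Nat.succ_lt_succ h)
  simpa using this

end Aux

/-- If `M` is a good monomial such that `AM` is also good, then
`Ad_s(w_M) = s w_M s⁻¹` fixes `ε̄_2`. -/
theorem ads_fixes_eb2 (l : ℕ) (hl0 : 0 < l) (hl : 2 ≤ l) (M : List Letter)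
    (hM : Good l M) (hAM : Good l (Letter.A :: M)) :
    sV l hl0 (wWord l 1 M (sVinv l hl0 (ebn l 1))) = ebn l 1 := by
  rw [sVinv_eb2 l hl0 hl,
    wWord_fix l hl0 hl M 1 le_rfl (good_cons_A l hl M hAM),
    sV_mu l hl0 hl]
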